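/- If u is a positive integer and the equation ℓ₁ = ℓ₂ + m·u has T solutions in triples (ℓ₁, ℓ₂, m) ∈ L × L × M with ℓ₁, ℓ₂ coprime to m, then there exists a divisor v of u such that the equation a = b + m·v has at least T / d(u) solutions in triples (a, b, m) with gcd(a, b) = 1, gcd(a,m) = gcd(b,m) = 1, where d(u) is the number of divisors of u. -/

import Mathlib

/-!
A solution `(ℓ₁, ℓ₂, m)` of `ℓ₁ = ℓ₂ + m u` with `ℓ₁` coprime to `m` has `g = gcd(ℓ₁, ℓ₂)` dividing
`m u`, hence dividing `u`; dividing out `g` gives a primitive solution `(ℓ₁/g, ℓ₂/g, m)` of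
`a = b + m (u/g)`, and this reduction is injective for fixed `g`. Since `g` ranges over the
divisors of `u`, some `g` collects at least `T / d(u)` solutions, and `v = u/g` works.
-/

open Finset

namespace Nat

theorem gcd_dvd_of_eq_add_mul {a b m u : ℕ} (hab : a = b + m * u) (ham : a.Coprime m) :
    gcd a b ∣ u := by
  have hmu : gcd a b ∣ m * u :=
    (Nat.dvd_add_right (gcd_dvd_right a b)).mp (hab ▸ gcd_dvd_left a b)
  exact ((ham.coprime_dvd_left (gcd_dvd_left a b)).dvd_of_dvd_mul_left) hmu

theorem div_gcd_eq_div_gcd_add_mul {a b m u : ℕ} (hab : a = b + m * u) (ham : a.Coprime m) :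
    a / gcd a b = b / gcd a b + m * (u / gcd a b) := by
  nth_rw 1 [hab]
  rw [Nat.add_div_of_dvd_right (gcd_dvd_right a b),
    Nat.mul_div_assoc m (gcd_dvd_of_eq_add_mul hab ham)]

end Nat

def solutions (L M : Finset ℕ) (u : ℕ) : Finset ((ℕ × ℕ) × ℕ) :=
  ((L ×ˢ L) ×ˢ M).filter (fun t => t.1.1 = t.1.2 + t.2 * u)

def primitiveSolutions (N : ℕ) (M : Finset ℕ) (v : ℕ) : Finset ((ℕ × ℕ) × ℕ) :=
  (((Icc 1 N) ×ˢ (Icc 1 N)) ×ˢ M).filter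
    (fun t => t.1.1 = t.1.2 + t.2 * v ∧ Nat.Coprime t.1.1 t.1.2 ∧
      Nat.Coprime t.1.1 t.2 ∧ Nat.Coprime t.1.2 t.2)

section

variable {L M : Finset ℕ} (hcop : ∀ ℓ ∈ L, ∀ m ∈ M, Nat.Coprime ℓ m)
include hcop

theorem gcd_mem_divisors_of_mem_solutions {u : ℕ} (hu : 0 < u) {t : (ℕ × ℕ) × ℕ}
    (ht : t ∈ solutions L M u) : Nat.gcd t.1.1 t.1.2 ∈ u.divisors := by
  simp only [solutions, mem_filter, mem_product] at ht
  obtain ⟨⟨⟨hℓ₁, -⟩, hm⟩, heq⟩ := ht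
  exact Nat.mem_divisors.mpr ⟨Nat.gcd_dvd_of_eq_add_mul heq (hcop _ hℓ₁ _ hm), hu.ne'⟩

theorem div_gcd_mem_primitiveSolutions (hL : ∀ ℓ ∈ L, 0 < ℓ) {u : ℕ} {t : (ℕ × ℕ) × ℕ}
    (ht : t ∈ solutions L M u) :
    ((t.1.1 / Nat.gcd t.1.1 t.1.2, t.1.2 / Nat.gcd t.1.1 t.1.2), t.2) ∈
      primitiveSolutions (L.sup id) M (u / Nat.gcd t.1.1 t.1.2) := by
  obtain ⟨⟨ℓ₁, ℓ₂⟩, m⟩ := t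
  simp only [solutions, mem_filter, mem_product] at ht
  obtain ⟨⟨⟨hℓ₁, hℓ₂⟩, hm⟩, heq⟩ := ht
  have hg : 0 < Nat.gcd ℓ₁ ℓ₂ := Nat.gcd_pos_of_pos_left _ (hL ℓ₁ hℓ₁)
  have mem_Icc_div_gcd : ∀ {ℓ}, ℓ ∈ L → Nat.gcd ℓ₁ ℓ₂ ∣ ℓ →
      ℓ / Nat.gcd ℓ₁ ℓ₂ ∈ Icc 1 (L.sup id) := fun hℓ hdvd =>
    mem_Icc.mpr ⟨Nat.div_pos (Nat.le_of_dvd (hL _ hℓ) hdvd) hg,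
      (Nat.div_le_self _ _).trans (le_sup (f := id) hℓ)⟩
  simp only [primitiveSolutions, mem_filter, mem_product]
  refine ⟨⟨⟨mem_Icc_div_gcd hℓ₁ (Nat.gcd_dvd_left _ _),
    mem_Icc_div_gcd hℓ₂ (Nat.gcd_dvd_right _ _)⟩, hm⟩, ?_, Nat.coprime_div_gcd_div_gcd hg, ?_, ?_⟩
  · exact Nat.div_gcd_eq_div_gcd_add_mul heq (hcop _ hℓ₁ _ hm)
  · exact (hcop _ hℓ₁ _ hm).coprime_div_left (Nat.gcd_dvd_left _ _)
  · exact (hcop _ hℓ₂ _ hm).coprime_div_left (Nat.gcd_dvd_right _ _)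

theorem card_filter_gcd_eq_le_card_primitiveSolutions (hL : ∀ ℓ ∈ L, 0 < ℓ) (u g : ℕ) :
    #{t ∈ solutions L M u | Nat.gcd t.1.1 t.1.2 = g} ≤
      #(primitiveSolutions (L.sup id) M (u / g)) := by
  refine card_le_card_of_injOn (fun t => ((t.1.1 / g, t.1.2 / g), t.2)) ?_ ?_
  · intro t ht
    obtain ⟨hsol, rfl⟩ := mem_filter.mp (mem_coe.mp ht)
    exact div_gcd_mem_primitiveSolutions hcop hL hsol
  · intro t ht t' ht' himg
    obtain ⟨-, rfl⟩ := mem_filter.mp (mem_coe.mp ht)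
    obtain ⟨-, hg'⟩ := mem_filter.mp (mem_coe.mp ht')
    simp only [Prod.mk.injEq] at himg
    obtain ⟨⟨h₁, h₂⟩, hm⟩ := himg
    refine Prod.ext (Prod.ext ?_ ?_) hm
    · exact (Nat.div_left_inj (Nat.gcd_dvd_left _ _) (hg' ▸ Nat.gcd_dvd_left _ _)).mp h₁
    · exact (Nat.div_left_inj (Nat.gcd_dvd_right _ _) (hg' ▸ Nat.gcd_dvd_right _ _)).mp h₂

end

theorem stmt_16_general (L M : Finset ℕ) (hL : ∀ ℓ ∈ L, 0 < ℓ)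
    (hcop : ∀ ℓ ∈ L, ∀ m ∈ M, Nat.Coprime ℓ m)
    (u : ℕ) (hu : 0 < u) (T : ℕ)
    (hT : T = (((L ×ˢ L) ×ˢ M).filter
        (fun t => t.1.1 = t.1.2 + t.2 * u)).card) :
    ∃ v : ℕ, v ∣ u ∧
      (T : ℝ) / u.divisors.card ≤
        ((((Finset.Icc 1 (L.sup id)) ×ˢ (Finset.Icc 1 (L.sup id))) ×ˢ M).filter
          (fun t => t.1.1 = t.1.2 + t.2 * v ∧ Nat.Coprime t.1.1 t.1.2 ∧
            Nat.Coprime t.1.1 t.2 ∧ Nat.Coprime t.1.2 t.2)).card := by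
  have hne : u.divisors.Nonempty := ⟨1, Nat.one_mem_divisors.mpr hu.ne'⟩
  have hd : (0 : ℝ) < #u.divisors := by exact_mod_cast hne.card_pos
  obtain ⟨g, hg, hpopular⟩ := exists_le_card_fiber_of_nsmul_le_card_of_maps_to
    (fun _ => gcd_mem_divisors_of_mem_solutions hcop hu) hne
    (b := (T : ℝ) / #u.divisors) (by rw [nsmul_eq_mul, mul_div_cancel₀ _ hd.ne', hT]; rfl)
  refine ⟨u / g, Nat.div_dvd_of_dvd (Nat.dvd_of_mem_divisors hg), hpopular.trans ?_⟩
  exact_mod_cast card_filter_gcd_eq_le_card_primitiveSolutions hcop hL u g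

theorem stmt_16 (L M : Finset ℕ) (hL : ∀ ℓ ∈ L, 0 < ℓ) (hM : ∀ m ∈ M, 0 < m)
    (hcop : ∀ ℓ ∈ L, ∀ m ∈ M, Nat.Coprime ℓ m)
    (u : ℕ) (hu : 0 < u) (T : ℕ)
    (hT : T = (((L ×ˢ L) ×ˢ M).filter
        (fun t => t.1.1 = t.1.2 + t.2 * u)).card) :
    ∃ v : ℕ, v ∣ u ∧
      (T : ℝ) / u.divisors.card ≤
        ((((Finset.Icc 1 (L.sup id)) ×ˢ (Finset.Icc 1 (L.sup id))) ×ˢ M).filter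
          (fun t => t.1.1 = t.1.2 + t.2 * v ∧ Nat.Coprime t.1.1 t.1.2 ∧
            Nat.Coprime t.1.1 t.2 ∧ Nat.Coprime t.1.2 t.2)).card :=
  stmt_16_general L M hL hcop u hu T hT
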